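/- Let G be a finite simple graph with a sum labeling ℓ, and let v₁, v₂ be vertices with exactly t₁ resp. t₂ terminals. Assume there exists a set W of vertices of G that are pairwise non-equivalent with |W| ≥ 2·(t₁−1)·(t₂−1) + 3. Then there exist positive integers j, k with gcd(j,k) = 1, j ≤ t₁ − 1, k ≤ t₂ − 1, and k·ℓ(v₁) = j·ℓ(v₂). -/

import Mathlib

/-!
Let `S` be the set of labels, `a = ℓ v₁`, `b = ℓ v₂`, and call `x ∈ S` a `d`-top if
`x + d ∉ S`. A vertex labelled by a `d`-top other than `d` is a terminal of a vertex labelled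
`d`, and so is that vertex itself; hence there are fewer than `t₁` `a`-tops other than `a`, and
`n ≤ t₂ - 1` `b`-tops other than `b`. Vertices with equal labels are equivalent, so
`|S| ≥ 2 (t₁ - 1) (t₂ - 1) + 3`.

Suppose `b / gcd(a, b) > t₂ - 1 ≥ n`. Climbing from `y ∈ S` in steps of `b` ends at a `b`-top,
and along `x, x + a, …, x + n a` these `b`-tops are pairwise distinct, because two of them
agree only if `b / gcd(a, b)` divides the difference of the indices. So if this progression
lies in `S`, one of its `b`-tops is `b` itself, i.e. `x + i a = b` with `i ≤ n`: at most
`n + 1` elements of `S` start such a progression. Every other element of `S` lies fewer than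
`n` steps of `a` below an `a`-top, and only `a` itself below the top `a`. Hence
`|S| ≤ (t₁ - 1) n + n + 2`, contradicting the bound above once `t₁ ≥ 2` (and `t₁ = 1` forces
`S = {a}`). By symmetry also `a / gcd(a, b) ≤ t₁ - 1`, and `j = a / gcd(a, b)`,
`k = b / gcd(a, b)` work.
-/

/-- A (possibly non-injective) sum labeling of a finite simple graph `G`. -/
def IsSumLabeling {V : Type*} (G : SimpleGraph V) (ℓ : V → ℕ) : Prop :=
  (∀ v : V, 1 ≤ ℓ v) ∧
  ∀ u v : V, u ≠ v → (G.Adj u v ↔ ∃ w : V, ℓ u + ℓ v = ℓ w)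

/-- Two vertices `u`, `v` are equivalent if `N(u) \ {v} = N(v) \ {u}`. -/
def Equiv' {V : Type*} (G : SimpleGraph V) (u v : V) : Prop :=
  G.neighborSet u \ {v} = G.neighborSet v \ {u}

namespace Finset

variable (S : Finset ℕ) (d : ℕ)

-- The search bound is harmless: for `0 < d` no `d`-run in `S` has more than `S.sup id` steps.
noncomputable def runLength (x : ℕ) : ℕ :=
  Nat.findGreatest (fun n => ∀ i ≤ n, x + i * d ∈ S) (S.sup id)

noncomputable def runTop (x : ℕ) : ℕ :=
  x + S.runLength d x * d

def runTops : Finset ℕ :=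
  S.filter fun x => x + d ∉ S

variable {S d} {x : ℕ}

lemma add_mul_mem_of_le_runLength (hx : x ∈ S) {i : ℕ} (hi : i ≤ S.runLength d x) :
    x + i * d ∈ S := by
  refine Nat.findGreatest_spec (P := fun n => ∀ i ≤ n, x + i * d ∈ S) (Nat.zero_le _) ?_ i hi
  simpa using hx

lemma add_runLength_succ_mul_notMem (hd : 0 < d) (hx : x ∈ S) :
    x + (S.runLength d x + 1) * d ∉ S := by
  intro hmem
  have hle : x + (S.runLength d x + 1) * d ≤ S.sup id := le_sup (f := id) hmem
  have : S.runLength d x + 1 ≤ S.runLength d x := by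
    refine Nat.le_findGreatest (by nlinarith) fun i hi => ?_
    rcases hi.lt_or_eq with hi | rfl
    · exact add_mul_mem_of_le_runLength hx (Nat.le_of_lt_succ hi)
    · exact hmem
  omega

lemma runTop_mem_runTops (hd : 0 < d) (hx : x ∈ S) : S.runTop d x ∈ S.runTops d := by
  refine mem_filter.2 ⟨add_mul_mem_of_le_runLength hx le_rfl, ?_⟩
  have := add_runLength_succ_mul_notMem hd hx
  rwa [Nat.succ_mul, ← add_assoc] at this

lemma eq_of_runTop_eq (hx : 0 < x) (h : S.runTop d x = d) : x = d := by
  rw [runTop] at h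
  rcases Nat.eq_zero_or_pos (S.runLength d x) with h0 | h0
  · simpa [h0] using h
  · nlinarith

lemma runTop_runLength_injective :
    Function.Injective fun x => (S.runTop d x, S.runLength d x) := by
  intro x y h
  obtain ⟨htop, hlen⟩ := Prod.mk.inj h
  rw [runTop, runTop, hlen] at htop
  omega

lemma runTop_add_mul_injOn {a b : ℕ} (hb : 0 < b) (x : ℕ) :
    Set.InjOn (fun i => S.runTop b (x + i * a)) (Set.Iio (b / b.gcd a)) := by
  intro i hi j hj h
  have hmod : x + i * a ≡ x + j * a [MOD b] := by
    simp only [runTop] at h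
    calc x + i * a ≡ x + i * a + S.runLength b (x + i * a) * b [MOD b] :=
          (Nat.add_mul_mod_self_right _ _ _).symm
      _ = x + j * a + S.runLength b (x + j * a) * b := h
      _ ≡ x + j * a [MOD b] := Nat.add_mul_mod_self_right _ _ _
  exact (Nat.ModEq.add_left_cancel' x hmod).cancel_right_div_gcd hb |>.eq_of_lt_of_lt hi hj

lemma pos_of_mem (hS : 0 ∉ S) (hx : x ∈ S) : 0 < x :=
  Nat.pos_of_ne_zero (ne_of_mem_of_not_mem hx hS)

lemma card_le_one_of_runTops_erase_eq_empty (hS : 0 ∉ S) (hd : 0 < d)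
    (h : (S.runTops d).erase d = ∅) : #S ≤ 1 := by
  refine card_le_one.2 fun x hx y hy => ?_
  have htop : ∀ z ∈ S, z = d := fun z hz => by
    refine eq_of_runTop_eq (S := S) (pos_of_mem hS hz) ?_
    by_contra hne
    simpa [h] using mem_erase.2 ⟨hne, runTop_mem_runTops hd hz⟩
  rw [htop x hx, htop y hy]

lemma card_filter_runLength_lt_le (hS : 0 ∉ S) (hd : 0 < d) (n : ℕ) :
    #{x ∈ S | S.runLength d x < n} ≤ #((S.runTops d).erase d) * n + 1 := by
  have hsub : {x ∈ S | S.runLength d x < n} ⊆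
      insert d {x ∈ S | S.runLength d x < n ∧ S.runTop d x ≠ d} := by
    intro x hx
    obtain ⟨hxS, hxn⟩ := mem_filter.1 hx
    by_cases htop : S.runTop d x = d
    · exact mem_insert.2 (Or.inl (eq_of_runTop_eq (pos_of_mem hS hxS) htop))
    · exact mem_insert_of_mem (mem_filter.2 ⟨hxS, hxn, htop⟩)
  have hcard : #{x ∈ S | S.runLength d x < n ∧ S.runTop d x ≠ d} ≤
      #((S.runTops d).erase d ×ˢ range n) := by
    refine card_le_card_of_injOn (fun x => (S.runTop d x, S.runLength d x)) (fun x hx => ?_)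
      runTop_runLength_injective.injOn
    obtain ⟨hxS, hxn, htop⟩ := mem_filter.1 hx
    exact mem_product.2 ⟨mem_erase.2 ⟨htop, runTop_mem_runTops hd hxS⟩, mem_range.2 hxn⟩
  calc #{x ∈ S | S.runLength d x < n}
      ≤ #{x ∈ S | S.runLength d x < n ∧ S.runTop d x ≠ d} + 1 :=
        (card_le_card hsub).trans (card_insert_le _ _)
    _ ≤ #((S.runTops d).erase d) * n + 1 := by
        simpa only [card_product, card_range] using Nat.add_le_add_right hcard 1

variable {a b m : ℕ}

lemma exists_add_mul_eq_of_card_runTops_erase_lt (hS : 0 ∉ S) (hb : 0 < b)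
    (hm : m ≤ b / b.gcd a) (hrun : ∀ i < m, x + i * a ∈ S)
    (hcard : #((S.runTops b).erase b) < m) : ∃ i < m, x + i * a = b := by
  by_contra! hne
  have hsub : (range m).image (fun i => S.runTop b (x + i * a)) ⊆ (S.runTops b).erase b := by
    simp only [subset_iff, mem_image, mem_range, forall_exists_index, and_imp]
    rintro _ i hi rfl
    refine mem_erase.2 ⟨fun h => hne i hi ?_, runTop_mem_runTops hb (hrun i hi)⟩
    exact eq_of_runTop_eq (pos_of_mem hS (hrun i hi)) h
  have hinj : Set.InjOn (fun i => S.runTop b (x + i * a)) (range m) :=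
    (runTop_add_mul_injOn hb x).mono fun i hi => (mem_range.1 hi).trans_le hm
  have := card_le_card hsub
  rw [card_image_of_injOn hinj, card_range] at this
  omega

lemma card_filter_le_runLength_le (hS : 0 ∉ S) (hb : 0 < b)
    (hβ : #((S.runTops b).erase b) < b / b.gcd a) :
    #{x ∈ S | #((S.runTops b).erase b) ≤ S.runLength a x} ≤ #((S.runTops b).erase b) + 1 := by
  set n := #((S.runTops b).erase b)
  have hsub : {x ∈ S | n ≤ S.runLength a x} ⊆ (range (n + 1)).image (fun i => b - i * a) := by
    intro x hx
    obtain ⟨hxS, hxn⟩ := mem_filter.1 hx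
    obtain ⟨i, hi, hxi⟩ := exists_add_mul_eq_of_card_runTops_erase_lt hS hb hβ
      (fun i hi => add_mul_mem_of_le_runLength hxS (by omega)) (Nat.lt_succ_self n)
    exact mem_image.2 ⟨i, mem_range.2 hi, by omega⟩
  exact (card_le_card hsub).trans (card_image_le.trans (card_range _).le)

lemma card_le_of_card_runTops_erase_lt (hS : 0 ∉ S) (ha : 0 < a) (hb : 0 < b)
    (hβ : #((S.runTops b).erase b) < b / b.gcd a) :
    #S ≤ #((S.runTops a).erase a) * #((S.runTops b).erase b) + #((S.runTops b).erase b) + 2 := by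
  rw [← card_filter_add_card_filter_not (p := fun x => S.runLength a x < #((S.runTops b).erase b))]
  have hshort := card_filter_runLength_lt_le hS ha #((S.runTops b).erase b)
  have hlong := card_filter_le_runLength_le hS hb hβ
  simp only [not_lt]
  omega

lemma div_gcd_le_of_card_runTops_erase_le {P Q : ℕ} (hS : 0 ∉ S) (ha : 0 < a) (hb : 0 < b)
    (hP : #((S.runTops a).erase a) ≤ P) (hQ : #((S.runTops b).erase b) ≤ Q)
    (hcard : 2 * P * Q + 3 ≤ #S) : b / b.gcd a ≤ Q := by
  by_contra! hβ
  have hP1 : 1 ≤ P := by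
    by_contra! hP0
    have := card_le_one_of_runTops_erase_eq_empty hS ha (card_eq_zero.1 (by omega))
    omega
  have := card_le_of_card_runTops_erase_lt hS ha hb (hQ.trans_lt hβ)
  nlinarith

end Finset

namespace IsSumLabeling

open Finset

variable {V : Type*} {G : SimpleGraph V} {ℓ : V → ℕ}

lemma equiv'_of_eq (hℓ : IsSumLabeling G ℓ) {u w : V} (h : ℓ u = ℓ w) : Equiv' G u w := by
  have key : ∀ z, z ≠ u → z ≠ w → (G.Adj u z ↔ G.Adj w z) := fun z hzu hzw => by
    rw [hℓ.2 u z hzu.symm, hℓ.2 w z hzw.symm, h]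
  ext z
  simp only [Set.mem_sdiff, SimpleGraph.mem_neighborSet, Set.mem_singleton_iff]
  constructor
  · rintro ⟨hadj, hzw⟩
    exact ⟨(key z hadj.ne' hzw).1 hadj, hadj.ne'⟩
  · rintro ⟨hadj, hzu⟩
    exact ⟨(key z hzu hadj.ne').2 hadj, hadj.ne'⟩

variable [Fintype V]

lemma card_runTops_erase_lt_ncard (hℓ : IsSumLabeling G ℓ) (v : V) :
    #(((univ.image ℓ).runTops (ℓ v)).erase (ℓ v)) < {w | ¬ G.Adj v w}.ncard := by
  classical
  have hsub : (↑(insert (ℓ v) (((univ.image ℓ).runTops (ℓ v)).erase (ℓ v))) : Set ℕ) ⊆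
      ℓ '' {w | ¬ G.Adj v w} := by
    intro e he
    rcases mem_insert.1 (mem_coe.1 he) with rfl | he
    · exact ⟨v, G.irrefl, rfl⟩
    obtain ⟨hev, he⟩ := mem_erase.1 he
    obtain ⟨heS, hetop⟩ := mem_filter.1 he
    obtain ⟨u, -, rfl⟩ := mem_image.1 heS
    refine ⟨u, fun hadj => hetop ?_, rfl⟩
    obtain ⟨w, hw⟩ := (hℓ.2 v u (by rintro rfl; exact hev rfl)).1 hadj
    exact mem_image.2 ⟨w, mem_univ w, by omega⟩
  calc #(((univ.image ℓ).runTops (ℓ v)).erase (ℓ v))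
      < #(insert (ℓ v) (((univ.image ℓ).runTops (ℓ v)).erase (ℓ v))) :=
        card_lt_card (ssubset_insert (notMem_erase _ _))
    _ ≤ (ℓ '' {w | ¬ G.Adj v w}).ncard := by
        rw [← Set.ncard_coe_finset]
        exact Set.ncard_le_ncard hsub
    _ ≤ {w | ¬ G.Adj v w}.ncard := Set.ncard_image_le

end IsSumLabeling

open Finset in
/-- If `v₁` and `v₂` have `t₁` resp. `t₂` terminals and the graph has at least
`2(t₁-1)(t₂-1)+3` pairwise non-equivalent vertices, then the labels of `v₁` and
`v₂` satisfy `k ℓ(v₁) = j ℓ(v₂)` for some coprime `j ≤ t₁ - 1`, `k ≤ t₂ - 1`. -/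
theorem merge_equation {V : Type*} [Fintype V]
    (G : SimpleGraph V) (ℓ : V → ℕ) (hℓ : IsSumLabeling G ℓ)
    (v₁ v₂ : V) (t₁ t₂ : ℕ)
    (ht₁ : Set.ncard {w : V | ¬ G.Adj v₁ w} = t₁)
    (ht₂ : Set.ncard {w : V | ¬ G.Adj v₂ w} = t₂)
    (W : Set V) (hW : ∀ u ∈ W, ∀ w ∈ W, u ≠ w → ¬ Equiv' G u w)
    (hWcard : 2 * (t₁ - 1) * (t₂ - 1) + 3 ≤ W.ncard) :
    ∃ j k : ℕ, 1 ≤ j ∧ 1 ≤ k ∧ Nat.gcd j k = 1 ∧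
      j ≤ t₁ - 1 ∧ k ≤ t₂ - 1 ∧ k * ℓ v₁ = j * ℓ v₂ := by
  set S := univ.image ℓ
  have hS : 0 ∉ S := fun h => by
    obtain ⟨v, -, hv⟩ := mem_image.1 h
    exact (hℓ.1 v).not_gt (by omega)
  have ha : 0 < ℓ v₁ := hℓ.1 v₁
  have hb : 0 < ℓ v₂ := hℓ.1 v₂
  have hP : #((S.runTops (ℓ v₁)).erase (ℓ v₁)) ≤ t₁ - 1 :=
    Nat.le_sub_one_of_lt (ht₁ ▸ hℓ.card_runTops_erase_lt_ncard v₁)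
  have hQ : #((S.runTops (ℓ v₂)).erase (ℓ v₂)) ≤ t₂ - 1 :=
    Nat.le_sub_one_of_lt (ht₂ ▸ hℓ.card_runTops_erase_lt_ncard v₂)
  have hWS : W.ncard ≤ #S := by
    rw [← Set.ncard_coe_finset]
    refine Set.ncard_le_ncard_of_injOn ℓ (fun w _ => by simp [S]) (fun u hu w hw h => ?_)
    by_contra hne
    exact hW u hu w hw hne (hℓ.equiv'_of_eq h)
  have hk := div_gcd_le_of_card_runTops_erase_le hS ha hb hP hQ (hWcard.trans hWS)
  have hj := div_gcd_le_of_card_runTops_erase_le hS hb ha hQ hP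
    (by rw [Nat.mul_right_comm]; exact hWcard.trans hWS)
  set g := (ℓ v₁).gcd (ℓ v₂)
  have hg : 0 < g := Nat.gcd_pos_of_pos_left _ ha
  rw [Nat.gcd_comm] at hk
  refine ⟨ℓ v₁ / g, ℓ v₂ / g, Nat.div_pos (Nat.gcd_le_left _ ha) hg,
    Nat.div_pos (Nat.gcd_le_right _ hb) hg, Nat.coprime_div_gcd_div_gcd hg, hj, hk, ?_⟩
  rw [Nat.div_mul_right_comm (Nat.gcd_dvd_right _ _),
    Nat.div_mul_right_comm (Nat.gcd_dvd_left _ _), mul_comm]
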